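/- For every n ≥ 4, the uniform probability distribution on the set of simple graphs with vertex set {1,...,n} whose number of edges is divisible by 3 is not pairwise independent: there exist two vertex-disjoint edges e and f such that Pr[X_e ∧ X_f] ≠ Pr[X_e]·Pr[X_f]. -/
import Mathlib


open scoped Classical

noncomputable def pr {n : ℕ} (μ : SimpleGraph (Fin n) → ℝ) (P : SimpleGraph (Fin n) → Prop) : ℝ :=
  ∑ G : SimpleGraph (Fin n), if P G then μ G else 0

def IsDist {n : ℕ} (μ : SimpleGraph (Fin n) → ℝ) : Prop :=
  (∀ G, 0 ≤ μ G) ∧ ∑ G : SimpleGraph (Fin n), μ G = 1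

def PairwiseIndep {n : ℕ} (μ : SimpleGraph (Fin n) → ℝ) : Prop :=
  ∀ u v x y : Fin n, u ≠ v → x ≠ y → u ≠ x → u ≠ y → v ≠ x → v ≠ y →
    pr μ (fun G => G.Adj u v ∧ G.Adj x y)
      = pr μ (fun G => G.Adj u v) * pr μ (fun G => G.Adj x y)

noncomputable def div3Uniform (n : ℕ) : SimpleGraph (Fin n) → ℝ := fun G =>
  if 3 ∣ Nat.card G.edgeSet then
    (1 : ℝ) /
      ((Finset.univ.filter
        (fun H : SimpleGraph (Fin n) => 3 ∣ Nat.card H.edgeSet)).card : ℝ)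
  else 0

open Finset

/-! ### Auxiliary counting machinery -/

def cnt : ℕ → ℕ → ℕ
  | 0, r => if r = 0 then 1 else 0
  | m+1, r => cnt m r + cnt m ((r+2) % 3)

def eps (d : ℕ) : ℤ :=
  match d % 6 with
  | 0 => 2 | 1 => 1 | 2 => -1 | 3 => -2 | 4 => -1 | _ => 1

lemma eps_congr {a b : ℕ} (h : a % 6 = b % 6) : eps a = eps b := by
  unfold eps; rw [h]

lemma eps_step (d : ℕ) : eps (d+1) = eps d + eps (d+2) := by
  have h : d % 6 = 0 ∨ d % 6 = 1 ∨ d % 6 = 2 ∨ d % 6 = 3 ∨ d % 6 = 4 ∨ d % 6 = 5 := by omega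
  unfold eps
  rcases h with h|h|h|h|h|h <;>
    rw [h, show (d+1) % 6 = (d % 6 + 1) % 6 from by omega,
      show (d+2) % 6 = (d % 6 + 2) % 6 from by omega, h] <;> rfl

lemma cnt_formula : ∀ m r, r < 3 → (3 : ℤ) * cnt m r = 2^m + eps (m + 4*r) := by
  intro m
  induction m with
  | zero =>
    intro r hr
    interval_cases r <;> simp [cnt, eps] <;> rfl
  | succ m ih =>
    intro r hr
    have h1 := ih r hr
    have h2 := ih ((r+2) % 3) (by omega)
    have e2 : eps (m + 4*((r+2) % 3)) = eps (m + 4*r + 2) := eps_congr (by omega)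
    have estep := eps_step (m + 4*r)
    rw [cnt]
    push_cast
    rw [show m + 1 + 4*r = m + 4*r + 1 from by omega, eps_step (m + 4*r), pow_succ]
    rw [e2] at h2
    linarith

lemma cnt_zero_pos : ∀ m, 0 < cnt m 0
  | 0 => by simp [cnt]
  | m+1 => by rw [cnt]; have := cnt_zero_pos m; omega

lemma count_powerset {β : Type*} [DecidableEq β] (t : Finset β) :
    ∀ r, r < 3 → (t.powerset.filter fun s => s.card % 3 = r).card = cnt t.card r := by
  induction t using Finset.induction_on with
  | empty => intro r hr; interval_cases r <;> simp [cnt, Finset.filter_singleton]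
  | @insert a t ha ih =>
    intro r hr
    rw [Finset.card_filter, Finset.sum_powerset_insert ha, Finset.card_insert_of_notMem ha, cnt]
    congr 1
    · rw [← ih r hr, Finset.card_filter]
    · rw [← ih _ (by omega), Finset.card_filter]
      refine Finset.sum_congr rfl fun s hs => ?_
      rw [Finset.mem_powerset] at hs
      have has : a ∉ s := fun h => ha (hs h)
      rw [Finset.card_insert_of_notMem has]
      congr 1
      simp only [eq_iff_iff]
      omega

lemma count_contains {α : Type*} [Fintype α] [DecidableEq α] (u : Finset α) (r : ℕ) (hr : r < 3) :
    (univ.filter fun s : Finset α => u ⊆ s ∧ s.card % 3 = r).card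
      = cnt (Fintype.card α - u.card) ((r + 2 * u.card) % 3) := by
  have hcard : (univ \ u).card = Fintype.card α - u.card := by
    rw [Finset.card_sdiff_of_subset (Finset.subset_univ u), Finset.card_univ]
  rw [← hcard, ← count_powerset _ _ (by omega)]
  apply Finset.card_bij (fun s _ => s \ u)
  · intro s hs
    simp only [Finset.mem_filter, Finset.mem_univ, true_and] at hs
    simp only [Finset.mem_filter, Finset.mem_powerset]
    refine ⟨Finset.sdiff_subset_sdiff (Finset.subset_univ s) le_rfl, ?_⟩
    rw [Finset.card_sdiff_of_subset hs.1]
    have := Finset.card_le_card hs.1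
    omega
  · intro s₁ h₁ s₂ h₂ h
    simp only [Finset.mem_filter, Finset.mem_univ, true_and] at h₁ h₂
    rw [← Finset.sdiff_union_of_subset h₁.1, ← Finset.sdiff_union_of_subset h₂.1, h]
  · intro b hb
    simp only [Finset.mem_filter, Finset.mem_powerset] at hb
    have hdisj : Disjoint b u := (Finset.sdiff_disjoint).mono_left hb.1
    refine ⟨b ∪ u, ?_, ?_⟩
    · simp only [Finset.mem_filter, Finset.mem_univ, true_and]
      refine ⟨Finset.subset_union_right, ?_⟩
      rw [Finset.card_union_of_disjoint hdisj]
      omega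
    · rw [Finset.union_sdiff_right, Finset.sdiff_eq_self_iff_disjoint.mpr hdisj]

/-! ### The graph/edge-set equivalence -/

noncomputable def graphEquiv (n : ℕ) :
    SimpleGraph (Fin n) ≃ Finset {e : Sym2 (Fin n) // ¬ e.IsDiag} where
  toFun G := Finset.univ.filter (fun e => e.1 ∈ G.edgeSet)
  invFun s := SimpleGraph.fromEdgeSet {e | ∃ h : ¬ e.IsDiag, ⟨e, h⟩ ∈ s}
  left_inv G := by
    ext u v
    simp only [SimpleGraph.fromEdgeSet_adj, Set.mem_setOf_eq, Finset.mem_filter,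
      Finset.mem_univ, true_and, SimpleGraph.mem_edgeSet]
    constructor
    · rintro ⟨⟨h, hadj⟩, hne⟩; exact hadj
    · intro h; exact ⟨⟨by simp [h.ne], h⟩, h.ne⟩
  right_inv s := by
    ext e
    simp only [Finset.mem_filter, Finset.mem_univ, true_and, SimpleGraph.edgeSet_fromEdgeSet,
      Set.mem_diff, Set.mem_setOf_eq]
    constructor
    · rintro ⟨⟨h, hmem⟩, -⟩
      convert hmem
    · intro h
      exact ⟨⟨e.2, by simpa using h⟩, e.2⟩

lemma graphEquiv_card {n : ℕ} (G : SimpleGraph (Fin n)) :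
    Nat.card G.edgeSet = (graphEquiv n G).card := by
  rw [Nat.card_eq_fintype_card, graphEquiv]
  simp only [Equiv.coe_fn_mk]
  rw [← Fintype.card_coe]
  apply Fintype.card_congr
  refine ⟨fun e => ⟨⟨e.1, G.not_isDiag_of_mem_edgeSet e.2⟩, by simp [e.2]⟩, fun e => ⟨e.1.1, by
    have := e.2; simp only [Finset.mem_filter] at this; exact this.2⟩, fun e => rfl, fun e => by
    ext; rfl⟩

lemma graphEquiv_adj {n : ℕ} (G : SimpleGraph (Fin n)) (u v : Fin n)
    (h : ¬ (s(u,v) : Sym2 (Fin n)).IsDiag) :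
    G.Adj u v ↔ (⟨s(u,v), h⟩ : {e : Sym2 (Fin n) // ¬ e.IsDiag}) ∈ graphEquiv n G := by
  simp [graphEquiv]

lemma card_filter_eq_of_iff {β : Type*} [Fintype β] {p q : β → Prop}
    {i : DecidablePred p} {j : DecidablePred q} (h : ∀ b, p b ↔ q b) :
    (@Finset.filter β p i univ).card = (@Finset.filter β q j univ).card := by
  have : @Finset.filter β p i univ = @Finset.filter β q j univ := by
    ext b
    rw [Finset.mem_filter, Finset.mem_filter]
    exact and_congr_right fun _ => h b
  rw [this]

lemma card_filter_equiv {β γ : Type*} [Fintype β] [Fintype γ] (e : β ≃ γ)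
    (p : β → Prop) (q : γ → Prop) {i : DecidablePred p} {j : DecidablePred q}
    (h : ∀ b, p b ↔ q (e b)) :
    (@Finset.filter β p i univ).card = (@Finset.filter γ q j univ).card := by
  rw [← Fintype.card_subtype, ← Fintype.card_subtype]
  exact Fintype.card_congr (Equiv.subtypeEquiv e h)

/-! ### Computing `pr` for the uniform distribution -/

lemma pr_div3 {n : ℕ} (P : SimpleGraph (Fin n) → Prop) :
    pr (div3Uniform n) P
      = ((univ.filter fun G : SimpleGraph (Fin n) => P G ∧ 3 ∣ Nat.card G.edgeSet).card : ℝ)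
        / ((univ.filter fun H : SimpleGraph (Fin n) => 3 ∣ Nat.card H.edgeSet).card : ℝ) := by
  set A := ((univ.filter fun H : SimpleGraph (Fin n) => 3 ∣ Nat.card H.edgeSet).card : ℝ) with hA
  unfold pr
  have h : ∀ G : SimpleGraph (Fin n), (if P G then div3Uniform n G else 0)
      = if P G ∧ 3 ∣ Nat.card G.edgeSet then 1/A else 0 := by
    intro G
    unfold div3Uniform
    by_cases h1 : P G <;> by_cases h2 : 3 ∣ Nat.card G.edgeSet <;> simp [h1, h2, hA]
  rw [Finset.sum_congr rfl fun G _ => h G, ← Finset.sum_filter, Finset.sum_const,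
    nsmul_eq_mul, mul_one_div]

/-! ### The central arithmetic fact -/

lemma core_ineq (N : ℕ) (hN : 6 ≤ N) :
    cnt (N-2) 1 * cnt N 0 ≠ cnt (N-1) 2 * cnt (N-1) 2 := by
  intro h
  obtain ⟨M, rfl⟩ : ∃ M, N = M + 2 := ⟨N - 2, by omega⟩
  have hM : 4 ≤ M := by omega
  simp only [show M+2-2 = M from by omega, show M+2-1 = M+1 from by omega] at h
  have hZ : ((cnt M 1 : ℤ)) * cnt (M+2) 0 = (cnt (M+1) 2 : ℤ) * cnt (M+1) 2 := by
    exact_mod_cast congrArg (Nat.cast : ℕ → ℤ) h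
  have hC := cnt_formula M 1 (by omega)
  have hA := cnt_formula (M+2) 0 (by omega)
  have hB := cnt_formula (M+1) 2 (by omega)
  have h9 : (2^M + eps (M + 4*1)) * (2^(M+2) + eps (M+2+4*0))
      = (2^(M+1) + eps (M+1+4*2)) * (2^(M+1) + eps (M+1+4*2)) := by
    rw [← hC, ← hA, ← hB]; linear_combination 9 * hZ
  have hx : (16:ℤ) ≤ 2^M := by
    calc (16:ℤ) = 2^4 := by norm_num
    _ ≤ 2^M := pow_le_pow_right₀ (by norm_num) hM
  set x : ℤ := 2^M with hxdef
  have hp1 : (2:ℤ)^(M+1) = 2*x := by rw [pow_succ]; ring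
  have hp2 : (2:ℤ)^(M+2) = 4*x := by rw [pow_add]; ring
  rw [hp1, hp2] at h9
  have E : ∀ a b : ℕ, a % 6 = b % 6 → eps a = eps b := fun _ _ => eps_congr
  have h6 : M % 6 = 0 ∨ M % 6 = 1 ∨ M % 6 = 2 ∨ M % 6 = 3 ∨ M % 6 = 4 ∨ M % 6 = 5 := by omega
  rcases h6 with h6|h6|h6|h6|h6|h6
  · rw [E (M+4*1) 4 (by omega), E (M+2+4*0) 2 (by omega), E (M+1+4*2) 3 (by omega)] at h9
    norm_num [eps] at h9
    have : 3*x - 3 = 0 := by linear_combination h9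
    linarith
  · rw [E (M+4*1) 5 (by omega), E (M+2+4*0) 3 (by omega), E (M+1+4*2) 4 (by omega)] at h9
    norm_num [eps] at h9
    have : 6*x - 3 = 0 := by linear_combination h9
    linarith
  · rw [E (M+4*1) 0 (by omega), E (M+2+4*0) 4 (by omega), E (M+1+4*2) 5 (by omega)] at h9
    norm_num [eps] at h9
    have : 3*x - 3 = 0 := by linear_combination h9
    linarith
  · rw [E (M+4*1) 1 (by omega), E (M+2+4*0) 5 (by omega), E (M+1+4*2) 0 (by omega)] at h9
    norm_num [eps] at h9
    have : -3*x - 3 = 0 := by linear_combination h9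
    linarith
  · rw [E (M+4*1) 2 (by omega), E (M+2+4*0) 0 (by omega), E (M+1+4*2) 1 (by omega)] at h9
    norm_num [eps] at h9
    have : -6*x - 3 = 0 := by linear_combination h9
    linarith
  · rw [E (M+4*1) 3 (by omega), E (M+2+4*0) 1 (by omega), E (M+1+4*2) 2 (by omega)] at h9
    norm_num [eps] at h9
    have : -3*x - 3 = 0 := by linear_combination h9
    linarith

set_option maxHeartbeats 1000000 in
theorem div3_uniform_not_pairwise_indep (n : ℕ) (hn : 4 ≤ n) :
    ∃ u v x y : Fin n, u ≠ v ∧ x ≠ y ∧ u ≠ x ∧ u ≠ y ∧ v ≠ x ∧ v ≠ y ∧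
      pr (div3Uniform n) (fun G => G.Adj u v ∧ G.Adj x y)
        ≠ pr (div3Uniform n) (fun G => G.Adj u v)
            * pr (div3Uniform n) (fun G => G.Adj x y) := by
  have hne : ∀ (a b : ℕ) (ha : a < n) (hb : b < n), a ≠ b → (⟨a, ha⟩ : Fin n) ≠ ⟨b, hb⟩ :=
    fun a b ha hb hab => by simp [Fin.ext_iff, hab]
  set u : Fin n := ⟨0, by omega⟩ with hu
  set v : Fin n := ⟨1, by omega⟩ with hv
  set x : Fin n := ⟨2, by omega⟩ with hx
  set y : Fin n := ⟨3, by omega⟩ with hy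
  have huv : u ≠ v := hne _ _ _ _ (by norm_num)
  have hxy : x ≠ y := hne _ _ _ _ (by norm_num)
  have hux : u ≠ x := hne _ _ _ _ (by norm_num)
  have huy : u ≠ y := hne _ _ _ _ (by norm_num)
  have hvx : v ≠ x := hne _ _ _ _ (by norm_num)
  have hvy : v ≠ y := hne _ _ _ _ (by norm_num)
  refine ⟨u, v, x, y, huv, hxy, hux, huy, hvx, hvy, ?_⟩
  obtain ⟨N, hNdef⟩ : ∃ N, Fintype.card {e : Sym2 (Fin n) // ¬ e.IsDiag} = N := ⟨_, rfl⟩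
  have hN6 : 6 ≤ N := by
    rw [← hNdef, Sym2.card_subtype_not_diag, Fintype.card_fin]
    calc (6:ℕ) = Nat.choose 4 2 := by decide
    _ ≤ n.choose 2 := Nat.choose_le_choose 2 hn
  have hde : ¬ (s(u,v) : Sym2 (Fin n)).IsDiag := by
    rw [Sym2.mk_isDiag_iff]; exact huv
  have hdf : ¬ (s(x,y) : Sym2 (Fin n)).IsDiag := by
    rw [Sym2.mk_isDiag_iff]; exact hxy
  set e₀ : {e : Sym2 (Fin n) // ¬ e.IsDiag} := ⟨s(u,v), hde⟩ with he₀
  set f₀ : {e : Sym2 (Fin n) // ¬ e.IsDiag} := ⟨s(x,y), hdf⟩ with hf₀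
  have hef : e₀ ≠ f₀ := by
    intro hc
    have hc2 : (s(u,v) : Sym2 (Fin n)) = s(x,y) := congrArg Subtype.val hc
    rw [Sym2.eq_iff] at hc2
    rcases hc2 with ⟨h1, -⟩ | ⟨h1, -⟩
    · exact hux h1
    · exact huy h1
  -- the three counts
  have hdenom : (univ.filter fun H : SimpleGraph (Fin n) => 3 ∣ Nat.card H.edgeSet).card
      = cnt N 0 := by
    refine (card_filter_equiv (graphEquiv n) _ (fun s => s.card % 3 = 0) (j := inferInstance) (fun H => by
      rw [graphEquiv_card]; exact Nat.dvd_iff_mod_eq_zero)).trans ?_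
    rw [← Finset.powerset_univ, count_powerset _ 0 (by norm_num), Finset.card_univ, hNdef]
  have hsingle : ∀ (a b : Fin n) (hd : ¬ (s(a,b) : Sym2 (Fin n)).IsDiag),
      (univ.filter fun G : SimpleGraph (Fin n) =>
        G.Adj a b ∧ 3 ∣ Nat.card G.edgeSet).card = cnt (N-1) 2 := by
    intro a b hd
    refine (card_filter_equiv (graphEquiv n) _
      (fun s => ({⟨s(a,b), hd⟩} : Finset {e : Sym2 (Fin n) // ¬ e.IsDiag}) ⊆ s
        ∧ s.card % 3 = 0) (j := inferInstance) (fun G => ?_)).trans ?_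
    · simp only [Finset.singleton_subset_iff]
      rw [graphEquiv_card]
      exact and_congr (graphEquiv_adj G a b hd) Nat.dvd_iff_mod_eq_zero
    · rw [count_contains _ 0 (by norm_num), Finset.card_singleton, hNdef]
  have hpair : (univ.filter fun G : SimpleGraph (Fin n) =>
      (G.Adj u v ∧ G.Adj x y) ∧ 3 ∣ Nat.card G.edgeSet).card = cnt (N-2) 1 := by
    refine (card_filter_equiv (graphEquiv n) _
      (fun s => ({e₀, f₀} : Finset {e : Sym2 (Fin n) // ¬ e.IsDiag}) ⊆ s
        ∧ s.card % 3 = 0) (j := inferInstance) (fun G => ?_)).trans ?_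
    · simp only [Finset.insert_subset_iff, Finset.singleton_subset_iff]
      rw [graphEquiv_card]
      exact and_congr (and_congr (graphEquiv_adj G u v hde) (graphEquiv_adj G x y hdf))
        Nat.dvd_iff_mod_eq_zero
    · rw [count_contains _ 0 (by norm_num),
        Finset.card_insert_of_notMem (by simp [hef]), Finset.card_singleton, hNdef]
  have Pp : pr (div3Uniform n) (fun G => G.Adj u v ∧ G.Adj x y)
      = ((cnt (N-2) 1 : ℕ) : ℝ) / ((cnt N 0 : ℕ) : ℝ) := by
    rw [pr_div3]
    congr 1
    · exact congrArg _ ((card_filter_eq_of_iff (fun G => Iff.rfl)).trans hpair)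
    · exact congrArg _ ((card_filter_eq_of_iff (fun H => Iff.rfl)).trans hdenom)
  have Puv : pr (div3Uniform n) (fun G => G.Adj u v)
      = ((cnt (N-1) 2 : ℕ) : ℝ) / ((cnt N 0 : ℕ) : ℝ) := by
    rw [pr_div3]
    congr 1
    · exact congrArg _ ((card_filter_eq_of_iff (fun G => Iff.rfl)).trans (hsingle u v hde))
    · exact congrArg _ ((card_filter_eq_of_iff (fun H => Iff.rfl)).trans hdenom)
  have Pxy : pr (div3Uniform n) (fun G => G.Adj x y)
      = ((cnt (N-1) 2 : ℕ) : ℝ) / ((cnt N 0 : ℕ) : ℝ) := by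
    rw [pr_div3]
    congr 1
    · exact congrArg _ ((card_filter_eq_of_iff (fun G => Iff.rfl)).trans (hsingle x y hdf))
    · exact congrArg _ ((card_filter_eq_of_iff (fun H => Iff.rfl)).trans hdenom)
  rw [Pp, Puv, Pxy]
  have hApos : 0 < cnt N 0 := cnt_zero_pos N
  have hA0 : ((cnt N 0 : ℕ) : ℝ) ≠ 0 := by positivity
  intro h
  rw [div_mul_div_comm, div_eq_div_iff hA0 (by positivity)] at h
  have h2 : ((cnt (N-2) 1 : ℕ) : ℝ) * cnt N 0 = (cnt (N-1) 2 : ℕ) * (cnt (N-1) 2 : ℕ) := by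
    apply mul_right_cancel₀ hA0
    linear_combination h
  have h3 : cnt (N-2) 1 * cnt N 0 = cnt (N-1) 2 * cnt (N-1) 2 := by exact_mod_cast h2
  exact core_ineq N hN6 h3
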